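/- (Boundedness of the measure.) For all integers k ≥ 0, f ≥ 1, N ≥ 0 and every integer x with 0 ≤ x < f·p^N: |E^{(k)}_{u:a_1,q}(x ; f·p^N)|_p ≤ 1. -/

import Mathlib

open Filter Finset

/-- For `q` in a normed field and a `p`-adic integer `z`, the power `q^z`, defined as the
limit of `q^(z mod p^N)` (for convergent `q` this agrees with `exp_p (z · log_p q)`). -/
noncomputable def qpow {p : ℕ} [Fact p.Prime] {K : Type*} [NormedField K] (q : K) (z : ℤ_[p]) :
    K :=
  limUnder atTop fun N : ℕ => q ^ (z.appr N)

/-- The `q`-number `[z : q] = (1 - q^z)/(1 - q)` for a `p`-adic integer `z`. -/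
noncomputable def qnum {p : ℕ} [Fact p.Prime] {K : Type*} [NormedField K] (q : K) (z : ℤ_[p]) :
    K :=
  (1 - qpow q z) / (1 - q)

/-- The `q`-analogue of the Euler–Barnes polynomial
`H_n^{(r)}(w, u, q | a_1, …, a_r)
  = (1-u)^r (1-q)^{-n} ∑_{l=0}^n C(n,l) (-1)^l q^{lw} ∏_j (1 - q^{l a_j} u)⁻¹`. -/
noncomputable def qEulerBarnes {p : ℕ} [Fact p.Prime] {K : Type*} [NormedField K]
    (r n : ℕ) (w : ℤ_[p]) (u q : K) (a : Fin r → ℤ_[p]) : K :=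
  (1 - u) ^ r * ((1 - q)⁻¹) ^ n *
    ∑ l ∈ Finset.range (n + 1),
      (n.choose l : K) * (-1) ^ l * qpow q ((l : ℤ_[p]) * w) *
        ∏ j, (1 - qpow q ((l : ℤ_[p]) * a j) * u)⁻¹

/-- The paper's distribution `E^{(k)}_{u:a_1,q}(x + M ℤ_p)` from formula (3):
`E^{(k)}(x; M) = u^x (1-q)^{-k} ∑_{l=0}^k C(k,l)(-1)^l q^{l a_1 x} (1 - q^{l a_1 M} u^M)⁻¹`. -/
noncomputable def Emeas {p : ℕ} [Fact p.Prime] {K : Type*} [NormedField K]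
    (u q : K) (a1 : ℤ_[p]) (k M x : ℕ) : K :=
  u ^ x * ((1 - q)⁻¹) ^ k *
    ∑ l ∈ Finset.range (k + 1),
      (k.choose l : K) * (-1) ^ l * qpow q (((l * x : ℕ) : ℤ_[p]) * a1) *
        (1 - qpow q (((l * M : ℕ) : ℤ_[p]) * a1) * u ^ M)⁻¹

/-!
For `‖q - 1‖ < 1` the powers `q^(z.appr N)` converge, since `‖q^(p^N) - 1‖` decays like the `N`-th
power of `max ‖p‖ ‖q - 1‖^(p-1)`; the limit `q^z` satisfies `‖q^z - 1‖ ≤ t := ‖q - 1‖` and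
`q^(n z) = (q^z)^n`. With `α = q^(x a₁)`, `β = q^(M a₁)` and `γ = u^M`, the sum in `Emeas` is `±`
the `k`-th forward difference at `0` of `l ↦ α^l (1 - β^l γ)⁻¹`. In an ultrametric ring, bounds
`‖Δ^j f‖ ≤ C t^j` multiply along products (Leibniz rule) and pass to reciprocals as `C⁻¹` when
`‖f‖ ≥ C`. Here `‖Δ^j α^l‖ ≤ t^j` and `‖Δ^j (1 - β^l γ)‖ ≤ ‖1 - γ‖ t^j`, with
`‖1 - β^l γ‖ = ‖1 - γ‖ ≥ 1`, so the `k`-th difference is at most `t^k / ‖1 - γ‖`: the `t^k` cancels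
`‖1 - q‖^(-k)`, and `‖1 - γ‖` dominates `‖u^x‖` because `x < M`.
-/

open Topology IsUltrametricDist

section FwdDiff

variable {R : Type*} [NormedRing R]

abbrev FwdDiffBoundedUpTo (t C : ℝ) (n : ℕ) (f : ℕ → R) : Prop :=
  ∀ j ≤ n, ∀ l, ‖(fwdDiff 1)^[j] f l‖ ≤ C * t ^ j

lemma fwdDiff_mul (f g : ℕ → R) :
    fwdDiff 1 (f * g) = fwdDiff 1 f * (fun l ↦ g (l + 1)) + f * fwdDiff 1 g := by
  ext l
  simp only [fwdDiff, Pi.mul_apply, Pi.add_apply]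
  noncomm_ring

namespace FwdDiffBoundedUpTo

variable {t C D : ℝ} {n : ℕ} {f g : ℕ → R}

lemma norm_le (hf : FwdDiffBoundedUpTo t C n f) (l : ℕ) : ‖f l‖ ≤ C := by
  simpa using hf 0 n.zero_le l

lemma zero_iff : FwdDiffBoundedUpTo t C 0 f ↔ ∀ l, ‖f l‖ ≤ C := by
  simp [FwdDiffBoundedUpTo]

lemma succ_iff : FwdDiffBoundedUpTo t C (n + 1) f ↔
    (∀ l, ‖f l‖ ≤ C) ∧ FwdDiffBoundedUpTo t (C * t) n (fwdDiff 1 f) := by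
  constructor
  · intro hf
    refine ⟨hf.norm_le, fun j hj l ↦ ?_⟩
    rw [← Function.iterate_succ_apply, mul_assoc, ← pow_succ']
    exact hf (j + 1) (by omega) l
  · rintro ⟨h₀, h₁⟩ (_ | j) hj l
    · simpa using h₀ l
    · rw [Function.iterate_succ_apply, pow_succ', ← mul_assoc]
      exact h₁ j (by omega) l

lemma mono (hf : FwdDiffBoundedUpTo t C n f) {m : ℕ} (hm : m ≤ n) :
    FwdDiffBoundedUpTo t C m f :=
  fun j hj ↦ hf j (hj.trans hm)

lemma comp_add (hf : FwdDiffBoundedUpTo t C n f) (m : ℕ) :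
    FwdDiffBoundedUpTo t C n (fun l ↦ f (l + m)) := by
  intro j hj l
  rw [fwdDiff_iter_comp_add]
  exact hf j hj (l + m)

lemma neg (hf : FwdDiffBoundedUpTo t C n f) : FwdDiffBoundedUpTo t C n (-f) := by
  intro j hj l
  rw [← neg_one_zsmul f, fwdDiff_iter_const_smul, Pi.smul_apply, neg_one_zsmul, norm_neg]
  exact hf j hj l

lemma add [IsUltrametricDist R] (hf : FwdDiffBoundedUpTo t C n f)
    (hg : FwdDiffBoundedUpTo t C n g) : FwdDiffBoundedUpTo t C n (f + g) := by
  intro j hj l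
  rw [fwdDiff_iter_add, Pi.add_apply]
  exact (norm_add_le_max _ _).trans (max_le (hf j hj l) (hg j hj l))

lemma norm_mul_apply_le (hf : FwdDiffBoundedUpTo t C n f) (hg : FwdDiffBoundedUpTo t D n g)
    (l : ℕ) : ‖(f * g) l‖ ≤ C * D :=
  (norm_mul_le _ _).trans <|
    mul_le_mul (hf.norm_le l) (hg.norm_le l) (norm_nonneg _) ((norm_nonneg _).trans (hf.norm_le l))

lemma mul [IsUltrametricDist R] (hf : FwdDiffBoundedUpTo t C n f)
    (hg : FwdDiffBoundedUpTo t D n g) : FwdDiffBoundedUpTo t (C * D) n (f * g) := by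
  induction n generalizing f g C D with
  | zero => exact zero_iff.mpr (hf.norm_mul_apply_le hg)
  | succ n ih =>
    refine succ_iff.mpr ⟨hf.norm_mul_apply_le hg, ?_⟩
    have h₁ := ih (succ_iff.mp hf).2 ((hg.comp_add 1).mono n.le_succ)
    have h₂ := ih (hf.mono n.le_succ) (succ_iff.mp hg).2
    rw [mul_right_comm] at h₁
    rw [← mul_assoc] at h₂
    rw [fwdDiff_mul]
    exact h₁.add h₂

end FwdDiffBoundedUpTo

end FwdDiff

section DivisionRing

variable {K : Type*} [NormedDivisionRing K]

lemma fwdDiff_inv {f : ℕ → K} (hf : ∀ l, f l ≠ 0) :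
    fwdDiff 1 f⁻¹ = -((fun l ↦ (f (l + 1))⁻¹) * fwdDiff 1 f * f⁻¹) := by
  ext l
  simp only [fwdDiff, Pi.inv_apply, Pi.neg_apply, Pi.mul_apply, inv_sub_inv' (hf _) (hf _)]
  noncomm_ring

lemma FwdDiffBoundedUpTo.inv [IsUltrametricDist K] {t C : ℝ} {n : ℕ} {f : ℕ → K}
    (hf : FwdDiffBoundedUpTo t C n f) (hC : 0 < C) (hfC : ∀ l, C ≤ ‖f l‖) :
    FwdDiffBoundedUpTo t C⁻¹ n f⁻¹ := by
  have hf₀ (l : ℕ) : f l ≠ 0 := norm_pos_iff.mp (hC.trans_le (hfC l))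
  have hnorm (l : ℕ) : ‖f⁻¹ l‖ ≤ C⁻¹ := by simpa using inv_anti₀ hC (hfC l)
  induction n with
  | zero => exact zero_iff.mpr hnorm
  | succ n ih =>
    have hinv := ih (hf.mono n.le_succ)
    refine succ_iff.mpr ⟨hnorm, ?_⟩
    rw [fwdDiff_inv hf₀]
    have hC' : C⁻¹ * (C * t) * C⁻¹ = C⁻¹ * t := by field_simp
    rw [← hC']
    exact (((hinv.comp_add 1).mul (succ_iff.mp hf).2).mul hinv).neg

end DivisionRing

lemma fwdDiff_iter_const_mul_pow {R : Type*} [CommRing R] (c α : R) (j : ℕ) :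
    (fwdDiff 1)^[j] (fun l ↦ c * α ^ l) = fun l ↦ c * (α - 1) ^ j * α ^ l := by
  induction j with
  | zero => simp
  | succ j ih =>
    rw [Function.iterate_succ_apply', ih]
    ext l
    simp only [fwdDiff]
    ring

lemma fwdDiff_one_sub_pow_mul {R : Type*} [CommRing R] (β γ : R) :
    fwdDiff 1 (fun l ↦ 1 - β ^ l * γ) = fun l ↦ γ * (1 - β) * β ^ l := by
  ext l
  simp only [fwdDiff]
  ring

lemma sum_choose_mul_neg_one_pow_mul {R : Type*} [CommRing R] (F : ℕ → R) (k : ℕ) :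
    ∑ l ∈ range (k + 1), (k.choose l : R) * (-1) ^ l * F l = (-1) ^ k * (fwdDiff 1)^[k] F 0 := by
  rw [fwdDiff_iter_eq_sum_shift, mul_sum]
  refine sum_congr rfl fun l hl ↦ ?_
  have hsign : (-1 : R) ^ k * (-1) ^ (k - l) = (-1) ^ l := by
    rw [← pow_add, show k + (k - l) = l + 2 * (k - l) by have := mem_range.mp hl; omega,
      pow_add, pow_mul, neg_one_sq, one_pow, mul_one]
  simp only [zero_add, nsmul_one, Nat.cast_id, zsmul_eq_mul]
  push_cast
  linear_combination -(↑(k.choose l) * F l) * hsign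

lemma FwdDiffBoundedUpTo.pow {K : Type*} [NormedField K] {t : ℝ} {n : ℕ} {α : K} (hα : ‖α‖ ≤ 1)
    (ht : ‖α - 1‖ ≤ t) :
    FwdDiffBoundedUpTo t 1 n (fun l ↦ α ^ l) := by
  intro j _ l
  have h := congrFun (fwdDiff_iter_const_mul_pow 1 α j) l
  simp only [one_mul] at h
  rw [h, norm_mul, norm_pow, norm_pow, one_mul]
  calc ‖α - 1‖ ^ j * ‖α‖ ^ l ≤ ‖α - 1‖ ^ j :=
        mul_le_of_le_one_right (by positivity) (pow_le_one₀ (norm_nonneg _) hα)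
    _ ≤ t ^ j := pow_le_pow_left₀ (norm_nonneg _) ht j

section Field

variable {K : Type*} [NormedField K] [IsUltrametricDist K]

lemma norm_le_one_of_norm_sub_one_le {q : K} (hq : ‖q - 1‖ ≤ 1) : ‖q‖ ≤ 1 := by
  simpa using (norm_add_le_max (q - 1) 1).trans (max_le hq norm_one.le)

lemma norm_le_norm_one_sub {γ : K} (hγ : 1 ≤ ‖1 - γ‖) : ‖γ‖ ≤ ‖1 - γ‖ := by
  simpa using (norm_add_le_max 1 (-(1 - γ))).trans (max_le (norm_one.trans_le hγ) (norm_neg _).le)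

lemma norm_one_sub_mul_eq {b γ : K} (hb : ‖b - 1‖ < 1) (hγ : 1 ≤ ‖1 - γ‖) :
    ‖1 - b * γ‖ = ‖1 - γ‖ := by
  have hlt : ‖-((b - 1) * γ)‖ < ‖1 - γ‖ := by
    rw [norm_neg, norm_mul]
    exact (mul_le_mul_of_nonneg_left (norm_le_norm_one_sub hγ) (norm_nonneg _)).trans_lt
      (mul_lt_of_lt_one_left (by linarith) hb)
  rw [show 1 - b * γ = (1 - γ) + -((b - 1) * γ) by ring,
    norm_add_eq_max_of_norm_ne_norm hlt.ne', max_eq_left hlt.le]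

lemma norm_pow_sub_one_le {q : K} (hq : ‖q‖ ≤ 1) (n : ℕ) : ‖q ^ n - 1‖ ≤ ‖q - 1‖ := by
  rw [← geom_sum_mul, norm_mul]
  refine mul_le_of_le_one_left (norm_nonneg _) (norm_sum_le_of_forall_le_of_nonneg zero_le_one ?_)
  exact fun i _ ↦ by simpa using pow_le_one₀ (norm_nonneg q) hq

lemma norm_pow_le_norm_one_sub_pow {u : K} {x M : ℕ} (hxM : x ≤ M) (hu : 1 ≤ ‖1 - u ^ M‖) :
    ‖u ^ x‖ ≤ ‖1 - u ^ M‖ := by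
  rw [norm_pow]
  rcases le_or_gt ‖u‖ 1 with h | h
  · exact (pow_le_one₀ (norm_nonneg u) h).trans hu
  · exact (pow_le_pow_right₀ h.le hxM).trans (norm_pow u M ▸ norm_le_norm_one_sub hu)

lemma norm_one_sub_pow_mul_eq {β γ : K} (hβ : ‖β - 1‖ < 1) (hγ : 1 ≤ ‖1 - γ‖) (l : ℕ) :
    ‖1 - β ^ l * γ‖ = ‖1 - γ‖ :=
  norm_one_sub_mul_eq
    ((norm_pow_sub_one_le (norm_le_one_of_norm_sub_one_le hβ.le) l).trans_lt hβ) hγ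

namespace FwdDiffBoundedUpTo

variable {t : ℝ} {n : ℕ}

lemma one_sub_pow_mul {β γ : K} (hβ : ‖β - 1‖ < 1) (ht : ‖β - 1‖ ≤ t) (hγ : 1 ≤ ‖1 - γ‖) :
    FwdDiffBoundedUpTo t ‖1 - γ‖ n (fun l ↦ 1 - β ^ l * γ) := by
  have hβ1 := norm_le_one_of_norm_sub_one_le hβ.le
  rintro (_ | j) _ l
  · simpa using (norm_one_sub_pow_mul_eq hβ hγ l).le
  · rw [Function.iterate_succ_apply, fwdDiff_one_sub_pow_mul, fwdDiff_iter_const_mul_pow,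
      norm_mul, norm_mul, norm_mul, norm_pow, norm_pow, norm_sub_rev 1 β, pow_succ']
    calc ‖γ‖ * ‖β - 1‖ * ‖β - 1‖ ^ j * ‖β‖ ^ l ≤ ‖1 - γ‖ * t * t ^ j * 1 := by
          have ht0 : 0 ≤ t := (norm_nonneg _).trans ht
          gcongr
          · exact norm_le_norm_one_sub hγ
          · exact pow_le_one₀ (norm_nonneg _) hβ1
      _ = ‖1 - γ‖ * (t * t ^ j) := by ring

end FwdDiffBoundedUpTo

lemma norm_fwdDiff_iter_pow_mul_inv_one_sub_le {t : ℝ} {α β γ : K} (hα : ‖α - 1‖ ≤ t)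
    (hβ : ‖β - 1‖ ≤ t) (ht : t < 1) (hγ : 1 ≤ ‖1 - γ‖) (k : ℕ) :
    ‖(fwdDiff 1)^[k] ((fun l ↦ α ^ l) * (fun l ↦ 1 - β ^ l * γ)⁻¹) 0‖ ≤ ‖1 - γ‖⁻¹ * t ^ k := by
  have hα₁ := norm_le_one_of_norm_sub_one_le (hα.trans ht.le)
  have hF := (FwdDiffBoundedUpTo.pow (n := k) hα₁ hα).mul
    ((FwdDiffBoundedUpTo.one_sub_pow_mul (hβ.trans_lt ht) hβ hγ).inv (by positivity)
      fun l ↦ (norm_one_sub_pow_mul_eq (hβ.trans_lt ht) hγ l).ge)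
  simpa using hF k le_rfl 0

lemma norm_pow_sub_pow_le_of_modEq {q : K} (hq : ‖q‖ ≤ 1) {a b m : ℕ} (h : a ≡ b [MOD m]) :
    ‖q ^ a - q ^ b‖ ≤ ‖q ^ m - 1‖ := by
  wlog hba : b ≤ a generalizing a b
  · rw [norm_sub_rev]
    exact this h.symm (le_of_not_ge hba)
  obtain ⟨c, hc⟩ := (Nat.modEq_iff_dvd' hba).mp h.symm
  have hsplit : q ^ a - q ^ b = q ^ b * ((q ^ m) ^ c - 1) := by
    rw [← pow_mul, ← hc, mul_sub, ← pow_add, Nat.add_sub_cancel' hba, mul_one]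
  rw [hsplit, norm_mul, norm_pow]
  exact (mul_le_of_le_one_left (norm_nonneg _) (pow_le_one₀ (norm_nonneg _) hq)).trans
    (norm_pow_sub_one_le (by simpa using pow_le_one₀ (norm_nonneg _) hq) c)

lemma norm_pow_prime_sub_one_le {p : ℕ} (hp : p.Prime) {Q : K} (hQ : ‖Q - 1‖ ≤ 1) :
    ‖Q ^ p - 1‖ ≤ ‖Q - 1‖ * max ‖(p : K)‖ (‖Q - 1‖ ^ (p - 1)) := by
  have hexpand : Q ^ p - 1 = ∑ i ∈ range p, (Q - 1) ^ (i + 1) * (p.choose (i + 1) : K) := by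
    have h := add_pow (Q - 1) 1 p
    simp only [one_pow, mul_one, sub_add_cancel, sum_range_succ' _ p, pow_zero,
      Nat.choose_zero_right, Nat.cast_one] at h
    rw [h, add_sub_cancel_right]
  rw [hexpand]
  refine norm_sum_le_of_forall_le_of_nonneg (by positivity) fun i hi ↦ ?_
  rw [norm_mul, norm_pow, pow_succ']
  rcases (Nat.succ_le_of_lt (mem_range.mp hi)).eq_or_lt with hip | hip
  · subst hip
    rw [Nat.choose_self, Nat.cast_one, norm_one, mul_one, Nat.succ_sub_one]
    exact mul_le_mul_of_nonneg_left (le_max_right _ _) (norm_nonneg _)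
  · obtain ⟨m, hm⟩ := hp.dvd_choose_self i.succ_ne_zero hip
    have hchoose : ‖(p.choose (i + 1) : K)‖ ≤ ‖(p : K)‖ := by
      rw [hm, Nat.cast_mul, norm_mul]
      exact mul_le_of_le_one_right (norm_nonneg _) (norm_natCast_le_one K m)
    rw [mul_assoc]
    refine mul_le_mul_of_nonneg_left ?_ (norm_nonneg _)
    exact (mul_le_of_le_one_left (norm_nonneg _) (pow_le_one₀ (norm_nonneg _) hQ)).trans
      (hchoose.trans (le_max_left _ _))

lemma norm_pow_prime_pow_sub_one_le {p : ℕ} (hp : p.Prime) {q : K} (hq : ‖q - 1‖ ≤ 1) (N : ℕ) :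
    ‖q ^ p ^ N - 1‖ ≤ ‖q - 1‖ * max ‖(p : K)‖ (‖q - 1‖ ^ (p - 1)) ^ N := by
  induction N with
  | zero => simp
  | succ N ih =>
    have hQ : ‖q ^ p ^ N - 1‖ ≤ ‖q - 1‖ :=
      norm_pow_sub_one_le (norm_le_one_of_norm_sub_one_le hq) _
    calc ‖q ^ p ^ (N + 1) - 1‖ = ‖(q ^ p ^ N) ^ p - 1‖ := by rw [← pow_mul, ← pow_succ]
      _ ≤ ‖q ^ p ^ N - 1‖ * max ‖(p : K)‖ (‖q ^ p ^ N - 1‖ ^ (p - 1)) :=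
        norm_pow_prime_sub_one_le hp (hQ.trans hq)
      _ ≤ ‖q - 1‖ * max ‖(p : K)‖ (‖q - 1‖ ^ (p - 1)) ^ N * max ‖(p : K)‖ (‖q - 1‖ ^ (p - 1)) := by
        gcongr
      _ = ‖q - 1‖ * max ‖(p : K)‖ (‖q - 1‖ ^ (p - 1)) ^ (N + 1) := by ring

lemma tendsto_norm_pow_prime_pow_sub_one {p : ℕ} (hp : p.Prime) (hpK : ‖(p : K)‖ < 1) {q : K}
    (hq : ‖q - 1‖ < 1) : Tendsto (fun N ↦ ‖q ^ p ^ N - 1‖) atTop (𝓝 0) := by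
  have hr : max ‖(p : K)‖ (‖q - 1‖ ^ (p - 1)) < 1 :=
    max_lt hpK (pow_lt_one₀ (norm_nonneg _) hq (by have := hp.two_le; omega))
  refine squeeze_zero (fun _ ↦ norm_nonneg _) (norm_pow_prime_pow_sub_one_le hp hq.le) ?_
  simpa using (tendsto_pow_atTop_nhds_zero_of_lt_one (by positivity) hr).const_mul ‖q - 1‖

end Field

namespace PadicInt

variable {p : ℕ} [Fact p.Prime]

lemma appr_modEq_of_le (z : ℤ_[p]) {m n : ℕ} (h : m ≤ n) : z.appr n ≡ z.appr m [MOD p ^ m] :=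
  ((Nat.modEq_iff_dvd' (z.appr_mono h)).mpr (z.dvd_appr_sub_appr m n h)).symm

lemma appr_natCast_mul_modEq (n : ℕ) (z : ℤ_[p]) (N : ℕ) :
    ((n : ℤ_[p]) * z).appr N ≡ n * z.appr N [MOD p ^ N] := by
  rw [← ZMod.natCast_eq_natCast_iff, Nat.cast_mul]
  change toZModPow N ((n : ℤ_[p]) * z) = (n : ZMod (p ^ N)) * toZModPow N z
  rw [map_mul, map_natCast]

end PadicInt

section qpow

variable {p : ℕ} [Fact p.Prime] {K : Type*} [NormedField K] [IsUltrametricDist K] [CompleteSpace K]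
  {q : K}

lemma tendsto_pow_appr_qpow (hpK : ‖(p : K)‖ < 1) (hq : ‖q - 1‖ < 1) (z : ℤ_[p]) :
    Tendsto (fun N ↦ q ^ z.appr N) atTop (𝓝 (qpow q z)) := by
  have hc : CauchySeq fun N ↦ q ^ z.appr N := by
    refine cauchySeq_of_le_tendsto_0 _ (fun n m N hn hm ↦ ?_)
      (tendsto_norm_pow_prime_pow_sub_one Fact.out hpK hq)
    rw [dist_eq_norm]
    exact norm_pow_sub_pow_le_of_modEq (norm_le_one_of_norm_sub_one_le hq.le)
      ((z.appr_modEq_of_le hn).trans (z.appr_modEq_of_le hm).symm)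
  obtain ⟨L, hL⟩ := cauchySeq_tendsto_of_complete hc
  rwa [qpow, hL.limUnder_eq]

lemma norm_qpow_sub_one_le (hpK : ‖(p : K)‖ < 1) (hq : ‖q - 1‖ < 1) (z : ℤ_[p]) :
    ‖qpow q z - 1‖ ≤ ‖q - 1‖ :=
  le_of_tendsto ((tendsto_pow_appr_qpow hpK hq z).sub_const 1).norm <|
    Eventually.of_forall fun _ ↦ norm_pow_sub_one_le (norm_le_one_of_norm_sub_one_le hq.le) _

lemma qpow_natCast_mul (hpK : ‖(p : K)‖ < 1) (hq : ‖q - 1‖ < 1) (n : ℕ) (z : ℤ_[p]) :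
    qpow q ((n : ℤ_[p]) * z) = qpow q z ^ n := by
  have hdiff : Tendsto (fun N ↦ q ^ ((n : ℤ_[p]) * z).appr N - q ^ (n * z.appr N)) atTop (𝓝 0) :=
    squeeze_zero_norm (fun N ↦ norm_pow_sub_pow_le_of_modEq
      (norm_le_one_of_norm_sub_one_le hq.le) (z.appr_natCast_mul_modEq n N))
      (tendsto_norm_pow_prime_pow_sub_one Fact.out hpK hq)
  have hpow : Tendsto (fun N ↦ q ^ (n * z.appr N)) atTop (𝓝 (qpow q z ^ n)) := by
    simpa only [pow_mul'] using (tendsto_pow_appr_qpow hpK hq z).pow n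
  refine tendsto_nhds_unique (tendsto_pow_appr_qpow hpK hq _) ?_
  simpa using hdiff.add hpow

lemma Emeas_eq_fwdDiff_iter (hpK : ‖(p : K)‖ < 1) (hq : ‖q - 1‖ < 1) (u : K) (a1 : ℤ_[p])
    (k M x : ℕ) :
    Emeas u q a1 k M x = u ^ x * (1 - q)⁻¹ ^ k * ((-1) ^ k * (fwdDiff 1)^[k]
      ((fun l ↦ qpow q ((x : ℤ_[p]) * a1) ^ l) *
        (fun l ↦ 1 - qpow q ((M : ℤ_[p]) * a1) ^ l * u ^ M)⁻¹) 0) := by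
  rw [Emeas, ← sum_choose_mul_neg_one_pow_mul]
  congr 1
  refine sum_congr rfl fun l _ ↦ ?_
  have hcast (n : ℕ) : ((l * n : ℕ) : ℤ_[p]) * a1 = l * (n * a1) := by push_cast; ring
  rw [hcast, hcast, qpow_natCast_mul hpK hq l, qpow_natCast_mul hpK hq l, Pi.mul_apply,
    Pi.inv_apply, mul_assoc]

end qpow

lemma rpow_neg_one_div_sub_one_le_one {x : ℝ} (hx : 1 ≤ x) : x ^ (-1 / (x - 1)) ≤ 1 :=
  Real.rpow_le_one_of_one_le_of_nonpos hx <| by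
    rw [neg_div]
    exact neg_nonpos.mpr (div_nonneg zero_le_one (by linarith))

theorem norm_Emeas_le_one_general
    {p : ℕ} [Fact p.Prime] {K : Type*} [NormedField K] [CompleteSpace K]
    [IsUltrametricDist K] (hpK : ‖(p : K)‖ = (p : ℝ)⁻¹)
    (a1 : ℤ_[p])
    (u q : K) (hu : ∀ f : ℕ, 1 ≤ f → 1 ≤ ‖1 - u ^ f‖)
    (hq1 : ‖1 - q‖ < (p : ℝ) ^ (-(1 : ℝ) / ((p : ℝ) - 1)))
    (k f N x : ℕ) (hx : x < f * p ^ N) :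
    ‖Emeas u q a1 k (f * p ^ N) x‖ ≤ 1 := by
  have hp : p.Prime := Fact.out
  set M := f * p ^ N
  set t := ‖q - 1‖
  set s := ‖1 - u ^ M‖
  have hpK' : ‖(p : K)‖ < 1 := hpK ▸ inv_lt_one_of_one_lt₀ (by exact_mod_cast hp.one_lt)
  have ht : t < 1 :=
    (norm_sub_rev q 1).trans_lt <|
      hq1.trans_le (rpow_neg_one_div_sub_one_le_one (by exact_mod_cast hp.one_le))
  have hs : 1 ≤ s := hu M (by omega)
  rw [Emeas_eq_fwdDiff_iter hpK' ht]
  simp only [norm_mul, norm_pow, norm_inv, norm_neg, norm_one, one_pow, one_mul,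
    norm_sub_rev (1 : K) q]
  calc ‖u‖ ^ x * t⁻¹ ^ k * ‖_‖ ≤ s * t⁻¹ ^ k * (s⁻¹ * t ^ k) := by
        gcongr
        · exact norm_pow u x ▸ norm_pow_le_norm_one_sub_pow hx.le hs
        · exact norm_fwdDiff_iter_pow_mul_inv_one_sub_le (norm_qpow_sub_one_le hpK' ht _)
            (norm_qpow_sub_one_le hpK' ht _) ht hs k
    _ = s * s⁻¹ * (t⁻¹ * t) ^ k := by ring
    _ ≤ 1 := by
        rw [mul_inv_cancel₀ (by positivity), one_mul]
        exact pow_le_one₀ (by positivity) inv_mul_le_one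

/-- **boundedness of the measure.** For all `k ≥ 0`, `f ≥ 1`, `N ≥ 0` and
`0 ≤ x < f p^N`: `‖E^{(k)}_{u:a_1,q}(x ; f p^N)‖ ≤ 1`. -/
theorem norm_Emeas_le_one
    {p : ℕ} [Fact p.Prime] {K : Type*} [NormedField K] [CompleteSpace K]
    [IsUltrametricDist K] (hpK : ‖(p : K)‖ = (p : ℝ)⁻¹)
    (a1 : ℤ_[p]) (ha1 : a1 ≠ 0)
    (u q : K) (hu : ∀ f : ℕ, 1 ≤ f → 1 ≤ ‖1 - u ^ f‖)
    (hq0 : 0 < ‖1 - q‖) (hq1 : ‖1 - q‖ < (p : ℝ) ^ (-(1 : ℝ) / ((p : ℝ) - 1)))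
    (k f N x : ℕ) (hf : 1 ≤ f) (hx : x < f * p ^ N) :
    ‖Emeas u q a1 k (f * p ^ N) x‖ ≤ 1 :=
  norm_Emeas_le_one_general hpK a1 u q hu hq1 k f N x hx
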